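/- arXiv:1111.4377 — 6 statements merged into one kernel-verified Lean document; each statement's English description precedes it below -/
import Mathlib

section
/- For n ∈ ℕ with n ≥ 1 and an integer k < 0, let A(n,k) := { x ∈ ℤⁿ : x_j ≤ 1 for j = 1,…,n and x_1 + ⋯ + x_n = k } and let a(n,k) denote its cardinality. Then a(n,k) ≤ a(n) · (|k| + (3/2)n)^{n−1}, where a(n) := (√n / α(n−1)) · 2^{n−1} / (n−1)! and α(m) denotes the Lebesgue volume of the unit ball in ℝ^m (with the convention α(0) = 1). -/
/-!
Writing `x = 1 - P` turns the points of `A(n,k)` into functions `P : Fin n → ℕ` of total mass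
`m = n + |k|`, so `a(n,k)` is the multiset coefficient `(m+1)(m+2)⋯(m+n-1) / (n-1)!`. Pairing the
`i`-th factor of this product with the `(n-i)`-th one and applying AM-GM bounds the product by
`(m + n/2)^(n-1) = (|k| + 3n/2)^(n-1)`. The remaining constant
`√n · 2^(n-1) / α(n-1)` is at least `1`, because the unit ball lies in the cube `[-1,1]^(n-1)`.
-/

open Finset MeasureTheory

def leOneSumEquivNatSum {ι : Type*} [Fintype ι] {k : ℤ} {m : ℕ}
    (hm : (m : ℤ) = Fintype.card ι - k) :
    {x : ι → ℤ // (∀ j, x j ≤ 1) ∧ ∑ j, x j = k} ≃ {P : ι → ℕ // ∑ j, P j = m} where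
  toFun x := ⟨fun j => (1 - x.1 j).toNat, by
    have hx : ∀ j, ((1 - x.1 j).toNat : ℤ) = 1 - x.1 j := fun j => by
      have := x.2.1 j; omega
    have : ((∑ j, (1 - x.1 j).toNat : ℕ) : ℤ) = m := by
      push_cast [hx]
      rw [sum_sub_distrib, x.2.2, hm]
      simp only [sum_const, card_univ, Int.nsmul_eq_mul, mul_one]
    exact_mod_cast this⟩
  invFun P := ⟨fun j => 1 - P.1 j, fun j => sub_le_self 1 (Nat.cast_nonneg _), by
    rw [sum_sub_distrib, ← Nat.cast_sum, P.2]
    simp [hm]⟩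
  left_inv x := by
    ext j
    have := x.2.1 j
    simp only
    omega
  right_inv P := by
    ext j
    simp

theorem card_leOne_sum_eq {ι : Type*} [Fintype ι] {k : ℤ} {m : ℕ}
    (hm : (m : ℤ) = Fintype.card ι - k) :
    Nat.card {x : ι → ℤ // (∀ j, x j ≤ 1) ∧ ∑ j, x j = k} = (Fintype.card ι).multichoose m := by
  classical
  rw [Nat.card_congr ((leOneSumEquivNatSum hm).trans (Sym.equivNatSumOfFintype ι m).symm),
    Nat.card_eq_fintype_card, Sym.card_sym_eq_multichoose]

theorem prod_range_add_le_pow {a : ℝ} (ha : 0 ≤ a) (r : ℕ) :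
    ∏ i ∈ range r, (a + i) ≤ (a + (r - 1) / 2) ^ r := by
  have hreflect : ∏ i ∈ range r, (a + i) = ∏ i ∈ range r, (a + (r - 1 - i)) := by
    rw [← prod_range_reflect]
    refine prod_congr rfl fun i hi => ?_
    rw [Nat.cast_sub (by simp at hi; omega), Nat.cast_sub (by simp at hi; omega)]
    simp
  -- AM-GM for the factors `i` and `r - 1 - i`, whose mean is the same for every `i`
  have hpair : ∀ i ∈ range r, (a + i) * (a + (r - 1 - i)) ≤ (a + (r - 1) / 2) ^ 2 := by
    intro i _
    nlinarith [sq_nonneg ((r : ℝ) - 1 - 2 * i)]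
  have hnonneg : ∀ i ∈ range r, 0 ≤ a + i := fun i _ => by positivity
  refine (pow_le_pow_iff_left₀ (prod_nonneg hnonneg) ?_ two_ne_zero).mp ?_
  · rcases r.eq_zero_or_pos with rfl | hr
    · simp
    · have : (1 : ℝ) ≤ r := by exact_mod_cast hr
      exact pow_nonneg (by linarith) r
  calc (∏ i ∈ range r, (a + i)) ^ 2
      = ∏ i ∈ range r, (a + i) * (a + (r - 1 - i)) := by
        rw [sq]; nth_rewrite 2 [hreflect]; rw [prod_mul_distrib]
    _ ≤ ∏ i ∈ range r, (a + (r - 1) / 2) ^ 2 := prod_le_prod (fun i hi => ?_) hpair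
    _ = ((a + (r - 1) / 2) ^ r) ^ 2 := by
        rw [prod_const, card_range, ← pow_mul, ← pow_mul, mul_comm]
  have hi' : (i : ℝ) + 1 ≤ r := by exact_mod_cast mem_range.mp hi
  exact mul_nonneg (hnonneg i hi) (by linarith)

theorem Nat.multichoose_le_pow_div_factorial (n m : ℕ) :
    (n.multichoose m : ℝ) ≤ (m + n / 2) ^ (n - 1) / (n - 1).factorial := by
  rcases n with _ | r
  · cases m <;> simp [Nat.multichoose_zero_right, Nat.multichoose_zero_succ]
  have hchoose : (r + 1).multichoose m * r.factorial = (m + 1).ascFactorial r := by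
    rw [Nat.multichoose_eq, Nat.ascFactorial_eq_factorial_mul_choose,
      show r + 1 + m - 1 = m + r by omega, Nat.choose_symm_add, mul_comm]
  rw [Nat.add_sub_cancel, le_div_iff₀ (by positivity), ← Nat.cast_mul, hchoose,
    Nat.ascFactorial_eq_prod_range]
  push_cast
  exact (prod_range_add_le_pow (by positivity) r).trans_eq (by ring)

theorem EuclideanSpace.volume_ball_le {ι : Type*} [Fintype ι] (x : EuclideanSpace ℝ ι) {r : ℝ}
    (hr : 0 < r) : volume (Metric.ball x r) ≤ ENNReal.ofReal ((2 * r) ^ Fintype.card ι) := by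
  have hsub : Metric.ball x r ⊆ WithLp.ofLp ⁻¹' Metric.ball (WithLp.ofLp x) r := fun y hy =>
    ((PiLp.lipschitzWith_ofLp 2 _).dist_le_mul y x).trans_lt (by simpa using hy)
  calc volume (Metric.ball x r) ≤ volume (WithLp.ofLp ⁻¹' Metric.ball (WithLp.ofLp x) r) :=
        measure_mono hsub
    _ = ENNReal.ofReal ((2 * r) ^ Fintype.card ι) := by
        rw [(PiLp.volume_preserving_ofLp ι).measure_preimage
          Metric.isOpen_ball.measurableSet.nullMeasurableSet, Real.volume_pi_ball _ hr]

theorem one_le_sqrt_div_volume_ball_mul {n : ℕ} (hn : 1 ≤ n) (r : ℕ) :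
    1 ≤ Real.sqrt n / (volume (Metric.ball (0 : EuclideanSpace ℝ (Fin r)) 1)).toReal * 2 ^ r := by
  have hpos : 0 < (volume (Metric.ball (0 : EuclideanSpace ℝ (Fin r)) 1)).toReal :=
    ENNReal.toReal_pos (Metric.measure_ball_pos volume _ one_pos).ne' measure_ball_lt_top.ne
  have hle : (volume (Metric.ball (0 : EuclideanSpace ℝ (Fin r)) 1)).toReal ≤ 2 ^ r :=
    ENNReal.toReal_le_of_le_ofReal (by positivity)
      ((EuclideanSpace.volume_ball_le 0 one_pos).trans_eq (by simp))
  have hsqrt : 1 ≤ Real.sqrt n := Real.one_le_sqrt.mpr (by exact_mod_cast hn)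
  rw [div_mul_eq_mul_div, one_le_div hpos]
  nlinarith

theorem stmt2 (n : ℕ) (hn : 1 ≤ n) (k : ℤ) (hk : k < 0) :
    (Nat.card {x : Fin n → ℤ // (∀ j, x j ≤ 1) ∧ ∑ j, x j = k} : ℝ) ≤
      (Real.sqrt n /
          (MeasureTheory.volume (Metric.ball (0 : EuclideanSpace ℝ (Fin (n - 1))) 1)).toReal) *
        2 ^ (n - 1) / (n - 1).factorial *
        (|(k : ℝ)| + (3 / 2) * n) ^ (n - 1) := by
  have hm : ((n + (-k).toNat : ℕ) : ℤ) = Fintype.card (Fin n) - k := by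
    simp only [Nat.cast_add, Int.ofNat_toNat, Fintype.card_fin]; omega
  have hmean : ((n + (-k).toNat : ℕ) : ℝ) + n / 2 = |(k : ℝ)| + 3 / 2 * n := by
    have : ((-k).toNat : ℝ) = |(k : ℝ)| := by
      rw [abs_of_neg (by exact_mod_cast hk)]; exact_mod_cast Int.toNat_of_nonneg (by omega)
    push_cast [this]; ring
  rw [card_leOne_sum_eq hm, Fintype.card_fin]
  calc ((n.multichoose (n + (-k).toNat) : ℕ) : ℝ)
      ≤ (|(k : ℝ)| + 3 / 2 * n) ^ (n - 1) / (n - 1).factorial :=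
        hmean ▸ Nat.multichoose_le_pow_div_factorial n _
    _ ≤ _ := le_mul_of_one_le_left (by positivity) (one_le_sqrt_div_volume_ball_mul hn (n - 1))
    _ = _ := by ring
end

section
/- Let α > 0 and let s satisfy α < s ≤ α + 1 and s > 1. For 0 < r ≤ 1 define I(r) := ∫∫_{{(x,y) : |x−y| ≤ 1/r}} ⟨x⟩^{−2s} |x−y|^{2α} ⟨y⟩^{−2s} m(dy) m(dx). Then as r ↓ 0: if α < s < α + 1 one has I(r) = O(r^{2(s−α−1)}), while if s = α + 1 one has I(r) = O(log(1/r)). In particular I(r) is finite for each such r. -/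
/-! Since `‖x - y‖ ≤ 1 / r` and `‖x - y‖ ≤ 2 max (‖x‖, ‖y‖)`, the kernel `‖x - y‖ ^ (2α)` is
at most `4 ^ α (min ρ ‖x‖ ^ (2α) + min ρ ‖y‖ ^ (2α))` with `ρ = 1 / (2r)`. This splitting bounds
`I(r)` by `2 · 4 ^ α · A · B`, where `B = ∫ ⟨x⟩ ^ (-2s)` is finite for `s > 1` and
`A = ∫ ⟨x⟩ ^ (-2s) min ρ ‖x‖ ^ (2α)`. In the plane, `x ↦ ‖x‖ ^ 2` pushes Lebesgue measure forward
to a constant multiple of Lebesgue measure on `(0, ∞)`, so `A` is a multiple of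
`∫₀^∞ (1 + u) ^ (-s) min M u ^ α du` with `M = ρ ^ 2`. Splitting this at `u = M` gives
`O(M ^ (α + 1 - s))` when `s < α + 1` and `O(log M)` when `s = α + 1`. -/

open MeasureTheory Set Metric
open scoped ENNReal

/- The squared Hilbert–Schmidt norm of the operator with convolution kernel
`1_{|x| ≤ 1/r} |x|^α` from `𝓗_s` to `𝓗_{−s}`. -/
noncomputable def stmt7I (s α r : ℝ) : ENNReal :=
  ∫⁻ x : EuclideanSpace ℝ (Fin 2),
    ∫⁻ y in {y : EuclideanSpace ℝ (Fin 2) | ‖x - y‖ ≤ 1 / r},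
      ENNReal.ofReal ((1 + ‖x‖ ^ 2) ^ (-s) * ‖x - y‖ ^ (2 * α) * (1 + ‖y‖ ^ 2) ^ (-s))

local notation "ℝ²" => EuclideanSpace ℝ (Fin 2)

theorem MeasureTheory.Measure.ext_of_Iic_of_ne_top {α : Type*} [TopologicalSpace α]
    [MeasurableSpace α] [SecondCountableTopology α] [LinearOrder α] [OrderTopology α]
    [BorelSpace α] [NoMinOrder α]
    (μ ν : Measure α) (hμ : ∀ a, μ (Iic a) ≠ ∞) (h : ∀ a, μ (Iic a) = ν (Iic a)) : μ = ν := by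
  refine μ.ext_of_Ioc' ν (fun a b _ ↦ ne_top_of_le_ne_top (hμ b) (measure_mono Ioc_subset_Iic_self))
    fun a b hab ↦ ?_
  have hsplit (ρ : Measure α) : ρ (Iic b) = ρ (Iic a) + ρ (Ioc a b) := by
    rw [← measure_union (Iic_disjoint_Ioc le_rfl) measurableSet_Ioc, Iic_union_Ioc_eq_Iic hab.le]
  have hμν := hsplit μ
  rw [h, h, hsplit ν] at hμν
  exact ((ENNReal.add_right_inj (h a ▸ hμ a)).1 hμν).symm

section NormSq

variable {E : Type*} [NormedAddCommGroup E] [NormedSpace ℝ E] [MeasurableSpace E] [BorelSpace E]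
  [FiniteDimensional ℝ E] (μ : Measure E) [μ.IsAddHaarMeasure]

theorem MeasureTheory.Measure.map_norm_sq_eq_smul_restrict (hE : Module.finrank ℝ E = 2) :
    μ.map (fun x ↦ ‖x‖ ^ 2) = μ (ball 0 1) • volume.restrict (Ioi 0) := by
  have hmeas : Measurable fun x : E ↦ ‖x‖ ^ 2 := by fun_prop
  have hIic (t : ℝ) : μ.map (fun x ↦ ‖x‖ ^ 2) (Iic t) = ENNReal.ofReal t * μ (ball 0 1) := by
    rw [Measure.map_apply hmeas measurableSet_Iic]
    rcases lt_or_ge t 0 with ht | ht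
    · have : (fun x : E ↦ ‖x‖ ^ 2) ⁻¹' Iic t = ∅ :=
        eq_empty_of_forall_notMem fun x hx ↦ (ht.trans_le (sq_nonneg ‖x‖)).not_ge hx
      simp [this, ENNReal.ofReal_of_nonpos ht.le]
    · have : (fun x : E ↦ ‖x‖ ^ 2) ⁻¹' Iic t = closedBall 0 (√t) := by
        ext x
        simp [Real.le_sqrt (norm_nonneg x) ht]
      rw [this, μ.addHaar_closedBall _ (Real.sqrt_nonneg t), hE, Real.sq_sqrt ht]
  refine Measure.ext_of_Iic_of_ne_top _ _ (fun t ↦ by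
    rw [hIic]; exact ENNReal.mul_ne_top ENNReal.ofReal_ne_top measure_ball_lt_top.ne) fun t ↦ ?_
  rw [hIic, Measure.smul_apply, Measure.restrict_apply measurableSet_Iic, Iic_inter_Ioi,
    Real.volume_Ioc, sub_zero, smul_eq_mul, mul_comm]

theorem lintegral_comp_norm_sq (hE : Module.finrank ℝ E = 2) {g : ℝ → ℝ≥0∞} (hg : Measurable g) :
    ∫⁻ x, g (‖x‖ ^ 2) ∂μ = μ (ball 0 1) * ∫⁻ u in Ioi 0, g u := by
  rw [← lintegral_map hg (by fun_prop), μ.map_norm_sq_eq_smul_restrict hE,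
    lintegral_smul_measure, smul_eq_mul]

theorem lintegral_one_add_norm_sq_rpow_neg_lt_top {s : ℝ} (hs : (Module.finrank ℝ E : ℝ) < 2 * s) :
    ∫⁻ x, ENNReal.ofReal ((1 + ‖x‖ ^ 2) ^ (-s)) ∂μ < ∞ := by
  simpa [neg_div] using (integrable_rpow_neg_one_add_norm_sq (μ := μ) hs).lintegral_lt_top

theorem lintegral_one_add_norm_sq_rpow_mul_min_rpow (hE : Module.finrank ℝ E = 2) {s α ρ : ℝ}
    (hρ : 0 ≤ ρ) :
    ∫⁻ x, ENNReal.ofReal ((1 + ‖x‖ ^ 2) ^ (-s)) * ENNReal.ofReal (min ρ ‖x‖ ^ (2 * α)) ∂μ =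
      μ (ball 0 1) *
        ∫⁻ u in Ioi 0, ENNReal.ofReal ((1 + u) ^ (-s)) * ENNReal.ofReal (min (ρ ^ 2) u ^ α) := by
  rw [← lintegral_comp_norm_sq μ hE (by fun_prop)]
  refine lintegral_congr fun x ↦ ?_
  have hmin : min (ρ ^ 2) (‖x‖ ^ 2) = min ρ ‖x‖ ^ 2 := by
    rcases le_total ρ ‖x‖ with hle | hle
    · rw [min_eq_left hle, min_eq_left (pow_le_pow_left₀ hρ hle 2)]
    · rw [min_eq_right hle, min_eq_right (pow_le_pow_left₀ (norm_nonneg x) hle 2)]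
  rw [hmin, Real.rpow_mul (by positivity), Real.rpow_two]

end NormSq

theorem lintegral_setLIntegral_le_two_mul {X : Type*} [MeasurableSpace X] (μ : Measure X)
    {W Φ : X → ℝ≥0∞} (hW : Measurable W) (hΦ : Measurable Φ) (S : X → Set X)
    (k : X → X → ℝ≥0∞) (hk : ∀ x, ∀ y ∈ S x, k x y ≤ Φ x + Φ y) :
    ∫⁻ x, ∫⁻ y in S x, W x * k x y * W y ∂μ ∂μ ≤
      2 * (∫⁻ x, W x * Φ x ∂μ) * ∫⁻ x, W x ∂μ := by
  calc ∫⁻ x, ∫⁻ y in S x, W x * k x y * W y ∂μ ∂μ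
      ≤ ∫⁻ x, ∫⁻ y, W x * Φ x * W y + W x * (W y * Φ y) ∂μ ∂μ := by
        refine lintegral_mono fun x ↦ (setLIntegral_mono (by fun_prop) fun y hy ↦ ?_).trans
          (setLIntegral_le_lintegral _ _)
        calc W x * k x y * W y ≤ W x * (Φ x + Φ y) * W y := by gcongr; exact hk x y hy
          _ = _ := by ring
    _ = ∫⁻ x, W x * Φ x * (∫⁻ y, W y ∂μ) + W x * ∫⁻ y, W y * Φ y ∂μ ∂μ := by
        refine lintegral_congr fun x ↦ ?_
        rw [lintegral_add_left (by fun_prop), lintegral_const_mul _ hW,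
          lintegral_const_mul _ (by fun_prop)]
    _ = 2 * (∫⁻ x, W x * Φ x ∂μ) * ∫⁻ x, W x ∂μ := by
        rw [lintegral_add_left (by fun_prop), lintegral_mul_const _ (by fun_prop),
          lintegral_mul_const _ hW]
        ring

theorem norm_sub_rpow_le {E : Type*} [SeminormedAddCommGroup E] {x y : E} {R p : ℝ}
    (hp : 0 ≤ p) (h : ‖x - y‖ ≤ R) :
    ‖x - y‖ ^ p ≤ 2 ^ p * (min (R / 2) ‖x‖ ^ p + min (R / 2) ‖y‖ ^ p) := by
  have hxy : ‖x - y‖ ≤ 2 * max (min (R / 2) ‖x‖) (min (R / 2) ‖y‖) := by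
    rw [← min_max_distrib_left, mul_min_of_nonneg _ _ zero_le_two]
    refine le_min (by linarith) ((norm_sub_le x y).trans ?_)
    linarith [le_max_left ‖x‖ ‖y‖, le_max_right ‖x‖ ‖y‖]
  have hR : 0 ≤ R := (norm_nonneg _).trans h
  have hmax : max (min (R / 2) ‖x‖) (min (R / 2) ‖y‖) ^ p ≤
      min (R / 2) ‖x‖ ^ p + min (R / 2) ‖y‖ ^ p := by
    have hx : 0 ≤ min (R / 2) ‖x‖ ^ p := by positivity
    have hy : 0 ≤ min (R / 2) ‖y‖ ^ p := by positivity
    rcases le_total (min (R / 2) ‖x‖) (min (R / 2) ‖y‖) with hle | hle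
    · rw [max_eq_right hle]; linarith
    · rw [max_eq_left hle]; linarith
  calc ‖x - y‖ ^ p ≤ (2 * max (min (R / 2) ‖x‖) (min (R / 2) ‖y‖)) ^ p := by gcongr
    _ ≤ _ := by rw [Real.mul_rpow zero_le_two (by positivity)]; gcongr

theorem lintegral_Ioi_rpow_of_lt {a c : ℝ} (ha : a < -1) (hc : 0 < c) :
    ∫⁻ t in Ioi c, ENNReal.ofReal (t ^ a) = ENNReal.ofReal (-c ^ (a + 1) / (a + 1)) := by
  rw [← integral_Ioi_rpow_of_lt ha hc, ofReal_integral_eq_lintegral_ofReal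
    (integrableOn_Ioi_rpow_of_lt ha hc)]
  filter_upwards [ae_restrict_mem measurableSet_Ioi] with t ht
  exact Real.rpow_nonneg (hc.trans ht).le a

theorem lintegral_Ioc_zero_rpow {a c : ℝ} (ha : -1 < a) (hc : 0 ≤ c) :
    ∫⁻ t in Ioc 0 c, ENNReal.ofReal (t ^ a) = ENNReal.ofReal (c ^ (a + 1) / (a + 1)) := by
  rw [← ofReal_integral_eq_lintegral_ofReal ((intervalIntegral.intervalIntegrable_rpow' ha).1)
    (by filter_upwards [ae_restrict_mem measurableSet_Ioc] with t ht using
      Real.rpow_nonneg ht.1.le a), ← intervalIntegral.integral_of_le hc, integral_rpow (.inl ha),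
    Real.zero_rpow (by linarith), sub_zero]

theorem lintegral_Ioc_zero_one_add_inv {c : ℝ} (hc : 0 ≤ c) :
    ∫⁻ t in Ioc 0 c, ENNReal.ofReal ((1 + t)⁻¹) = ENNReal.ofReal (Real.log (1 + c)) := by
  have hint : IntervalIntegrable (fun t : ℝ ↦ (1 + t)⁻¹) volume 0 c :=
    (continuousOn_const.add continuousOn_id).inv₀ (fun t ht ↦ by
      rw [uIcc_of_le hc] at ht; simp only [Pi.add_apply, id]; linarith [ht.1])
      |>.intervalIntegrable
  rw [← ofReal_integral_eq_lintegral_ofReal hint.1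
    (by filter_upwards [ae_restrict_mem measurableSet_Ioc] with t ht using
      inv_nonneg.2 (by linarith [ht.1])), ← intervalIntegral.integral_of_le hc,
    intervalIntegral.integral_comp_add_left (fun t ↦ t⁻¹), integral_inv_of_pos (by norm_num)
      (by linarith), add_zero, div_one]

theorem lintegral_one_add_rpow_mul_min_rpow_le {s α M : ℝ} (hs : 0 ≤ s) (hα : 0 ≤ α)
    (hM : 0 ≤ M) :
    ∫⁻ u in Ioi 0, ENNReal.ofReal ((1 + u) ^ (-s)) * ENNReal.ofReal (min M u ^ α) ≤
      (∫⁻ u in Ioc 0 M, ENNReal.ofReal ((1 + u) ^ (α - s))) +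
        ENNReal.ofReal (M ^ α) * ∫⁻ u in Ioi M, ENNReal.ofReal (u ^ (-s)) := by
  rw [← Ioc_union_Ioi_eq_Ioi hM, lintegral_union measurableSet_Ioi (Ioc_disjoint_Ioi le_rfl),
    ← lintegral_const_mul _ (by fun_prop : Measurable fun u : ℝ ↦ ENNReal.ofReal (u ^ (-s)))]
  gcongr ?_ + ?_
  · refine setLIntegral_mono' measurableSet_Ioc fun u hu ↦ ?_
    have hu0 : 0 < u := hu.1
    rw [← ENNReal.ofReal_mul (by positivity)]
    refine ENNReal.ofReal_le_ofReal ?_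
    calc (1 + u) ^ (-s) * min M u ^ α ≤ (1 + u) ^ (-s) * (1 + u) ^ α := by
          gcongr; exact (min_le_right _ _).trans (by linarith)
      _ = (1 + u) ^ (α - s) := by rw [← Real.rpow_add (by linarith)]; ring_nf
  · refine setLIntegral_mono' measurableSet_Ioi fun u hu ↦ ?_
    have hu0 : 0 < u := hM.trans_lt hu
    rw [← ENNReal.ofReal_mul (by positivity), ← ENNReal.ofReal_mul (by positivity)]
    refine ENNReal.ofReal_le_ofReal ?_
    rw [mul_comm (M ^ α)]
    exact mul_le_mul (Real.rpow_le_rpow_of_nonpos hu0 (by linarith) (by linarith))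
      (by gcongr; exact min_le_left _ _) (by positivity) (by positivity)

theorem ofReal_rpow_mul_lintegral_Ioi_rpow_neg {s α M : ℝ} (hs : 1 < s) (hM : 0 < M) :
    ENNReal.ofReal (M ^ α) * ∫⁻ u in Ioi M, ENNReal.ofReal (u ^ (-s)) =
      ENNReal.ofReal (M ^ (α - s + 1) / (s - 1)) := by
  rw [lintegral_Ioi_rpow_of_lt (by linarith) hM, ← ENNReal.ofReal_mul (by positivity),
    neg_div, ← div_neg, mul_div_assoc', ← Real.rpow_add hM]
  ring_nf

theorem lintegral_one_add_rpow_mul_min_rpow_le_rpow {s α M : ℝ} (hαs : α < s) (hs : 1 < s)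
    (hsα : s < α + 1) (hM : 0 < M) :
    ∫⁻ u in Ioi 0, ENNReal.ofReal ((1 + u) ^ (-s)) * ENNReal.ofReal (min M u ^ α) ≤
      ENNReal.ofReal ((1 / (α - s + 1) + 1 / (s - 1)) * M ^ (α - s + 1)) := by
  have hbulk : ∫⁻ u in Ioc 0 M, ENNReal.ofReal ((1 + u) ^ (α - s)) ≤
      ENNReal.ofReal (M ^ (α - s + 1) / (α - s + 1)) := by
    rw [← lintegral_Ioc_zero_rpow (by linarith) hM.le]
    refine setLIntegral_mono' measurableSet_Ioc fun u hu ↦ ENNReal.ofReal_le_ofReal ?_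
    exact Real.rpow_le_rpow_of_nonpos hu.1 (by linarith) (by linarith)
  have hβ : 0 < α - s + 1 := by linarith
  refine (lintegral_one_add_rpow_mul_min_rpow_le (by linarith) (by linarith) hM.le).trans ?_
  rw [ofReal_rpow_mul_lintegral_Ioi_rpow_neg hs hM, add_mul, ENNReal.ofReal_add (by positivity)
    (by have := sub_pos.2 hs; positivity)]
  gcongr
  · simpa [div_eq_inv_mul] using hbulk
  · rw [one_div_mul_eq_div]

theorem lintegral_one_add_rpow_mul_min_rpow_le_log {α M : ℝ} (hα : 0 < α) (hM : 0 < M) :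
    ∫⁻ u in Ioi 0, ENNReal.ofReal ((1 + u) ^ (-(α + 1))) * ENNReal.ofReal (min M u ^ α) ≤
      ENNReal.ofReal (Real.log (1 + M) + 1 / α) := by
  refine (lintegral_one_add_rpow_mul_min_rpow_le (by linarith) hα.le hM.le).trans ?_
  have hbulk : ∫⁻ u in Ioc 0 M, ENNReal.ofReal ((1 + u) ^ (α - (α + 1))) =
      ENNReal.ofReal (Real.log (1 + M)) := by
    simp_rw [sub_add_cancel_left, Real.rpow_neg_one]
    exact lintegral_Ioc_zero_one_add_inv hM.le
  rw [hbulk, ofReal_rpow_mul_lintegral_Ioi_rpow_neg (by linarith) hM,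
    show α - (α + 1) + 1 = 0 by ring,
    add_sub_cancel_right, Real.rpow_zero, ENNReal.ofReal_add (Real.log_nonneg (by linarith))
    (by positivity)]

theorem stmt7I_le {s α r : ℝ} (hα : 0 ≤ α) (hr : 0 < r) :
    stmt7I s α r ≤ 2 * ENNReal.ofReal (4 ^ α) * volume (ball (0 : ℝ²) 1) *
      (∫⁻ x : ℝ², ENNReal.ofReal ((1 + ‖x‖ ^ 2) ^ (-s))) *
      ∫⁻ u in Ioi 0, ENNReal.ofReal ((1 + u) ^ (-s)) *
        ENNReal.ofReal (min ((1 / r / 2) ^ 2) u ^ α) := by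
  set W : ℝ² → ℝ≥0∞ := fun x ↦ ENNReal.ofReal ((1 + ‖x‖ ^ 2) ^ (-s))
  set Φ : ℝ² → ℝ≥0∞ := fun x ↦
    ENNReal.ofReal (2 ^ (2 * α)) * ENNReal.ofReal (min (1 / r / 2) ‖x‖ ^ (2 * α))
  have hI : stmt7I s α r = ∫⁻ x, ∫⁻ y in {y | ‖x - y‖ ≤ 1 / r},
      W x * ENNReal.ofReal (‖x - y‖ ^ (2 * α)) * W y := by
    refine lintegral_congr fun x ↦ lintegral_congr fun y ↦ ?_
    rw [ENNReal.ofReal_mul (by positivity), ENNReal.ofReal_mul (by positivity)]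
  have hk : ∀ x, ∀ y ∈ {y | ‖x - y‖ ≤ 1 / r}, ENNReal.ofReal (‖x - y‖ ^ (2 * α)) ≤ Φ x + Φ y := by
    intro x y hy
    rw [← mul_add, ← ENNReal.ofReal_add (by positivity) (by positivity),
      ← ENNReal.ofReal_mul (by positivity)]
    exact ENNReal.ofReal_le_ofReal (norm_sub_rpow_le (by positivity) hy)
  have hWΦ : ∫⁻ x, W x * Φ x =
      ENNReal.ofReal (4 ^ α) * volume (ball (0 : ℝ²) 1) *
        ∫⁻ u in Ioi 0, ENNReal.ofReal ((1 + u) ^ (-s)) *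
          ENNReal.ofReal (min ((1 / r / 2) ^ 2) u ^ α) := by
    simp_rw [Φ, mul_left_comm (W _)]
    rw [lintegral_const_mul _ (by fun_prop), lintegral_one_add_norm_sq_rpow_mul_min_rpow
      _ finrank_euclideanSpace_fin (by positivity), Real.rpow_mul zero_le_two, ← mul_assoc]
    norm_num
  rw [hI]
  refine (lintegral_setLIntegral_le_two_mul volume (by fun_prop) (by fun_prop) _ _ hk).trans_eq ?_
  rw [hWΦ]
  ring

theorem one_div_div_two_sq_rpow {r : ℝ} (hr : 0 < r) (q : ℝ) :
    ((1 / r / 2) ^ 2) ^ q = 2 ^ (-(2 * q)) * r ^ (-(2 * q)) := by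
  rw [← Real.rpow_natCast, ← Real.rpow_mul (by positivity), show 1 / r / 2 = (2 * r)⁻¹ by ring,
    Real.inv_rpow (by positivity), ← Real.rpow_neg (by positivity), Real.mul_rpow zero_le_two hr.le]
  norm_num

theorem log_one_add_half_sq_add_le {t c : ℝ} (ht : 4 ≤ t) (hc : 0 ≤ c) :
    Real.log (1 + (t / 2) ^ 2) + c ≤ (2 + c) * Real.log t := by
  have hlog : 1 ≤ Real.log t := by
    rw [Real.le_log_iff_exp_le (by linarith)]
    linarith [Real.exp_one_lt_d9]
  have hsq : Real.log (1 + (t / 2) ^ 2) ≤ 2 * Real.log t := by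
    rw [show 2 * Real.log t = Real.log (t ^ 2) by rw [Real.log_pow]; norm_num]
    exact Real.log_le_log (by positivity) (by nlinarith)
  nlinarith

theorem stmt7 (α s : ℝ) (hα : 0 < α) (h1 : α < s) (h2 : s ≤ α + 1) (h3 : 1 < s) :
    (∀ r : ℝ, 0 < r → r ≤ 1 → stmt7I s α r < ⊤) ∧
    (s < α + 1 → ∃ C : ℝ, ∃ r0 > (0 : ℝ), ∀ r : ℝ, 0 < r → r ≤ r0 →
      stmt7I s α r ≤ ENNReal.ofReal (C * r ^ (2 * (s - α - 1)))) ∧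
    (s = α + 1 → ∃ C : ℝ, ∃ r0 > (0 : ℝ), ∀ r : ℝ, 0 < r → r ≤ r0 →
      stmt7I s α r ≤ ENNReal.ofReal (C * Real.log (1 / r))) := by
  set K := 2 * ENNReal.ofReal (4 ^ α) * volume (ball (0 : ℝ²) 1) *
    ∫⁻ x : ℝ², ENNReal.ofReal ((1 + ‖x‖ ^ 2) ^ (-s))
  have hK : K ≠ ∞ := by
    refine ENNReal.mul_ne_top (by finiteness) (lintegral_one_add_norm_sq_rpow_neg_lt_top _ ?_).ne
    simp only [finrank_euclideanSpace_fin]; push_cast; linarith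
  have hbound {r y : ℝ} (hr : 0 < r) (hy : ∫⁻ u in Ioi 0, ENNReal.ofReal ((1 + u) ^ (-s)) *
      ENNReal.ofReal (min ((1 / r / 2) ^ 2) u ^ α) ≤ ENNReal.ofReal y) :
      stmt7I s α r ≤ ENNReal.ofReal (K.toReal * y) := by
    rw [ENNReal.ofReal_mul ENNReal.toReal_nonneg, ENNReal.ofReal_toReal hK]
    exact (stmt7I_le hα.le hr).trans (by gcongr)
  have hpow {r : ℝ} (hr : 0 < r) (hs : s < α + 1) := hbound hr
    (lintegral_one_add_rpow_mul_min_rpow_le_rpow h1 h3 hs (by positivity))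
  have hlog {r : ℝ} (hr : 0 < r) (hs : s = α + 1) :
      stmt7I s α r ≤ ENNReal.ofReal (K.toReal * (Real.log (1 + (1 / r / 2) ^ 2) + 1 / α)) :=
    hbound hr (by subst hs; exact lintegral_one_add_rpow_mul_min_rpow_le_log hα (by positivity))
  refine ⟨fun r hr _ ↦ ?_, fun hs ↦ ?_, fun hs ↦ ?_⟩
  · rcases h2.lt_or_eq with hs | hs
    exacts [(hpow hr hs).trans_lt ENNReal.ofReal_lt_top,
      (hlog hr hs).trans_lt ENNReal.ofReal_lt_top]
  · refine ⟨K.toReal * ((1 / (α - s + 1) + 1 / (s - 1)) * 2 ^ (2 * (s - α - 1))), 1, one_pos,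
      fun r hr _ ↦ (hpow hr hs).trans_eq ?_⟩
    rw [one_div_div_two_sq_rpow hr, show -(2 * (α - s + 1)) = 2 * (s - α - 1) by ring]
    ring_nf
  · refine ⟨K.toReal * (2 + 1 / α), 1 / 4, by norm_num, fun r hr hr4 ↦ (hlog hr hs).trans ?_⟩
    rw [mul_assoc]
    refine ENNReal.ofReal_le_ofReal (mul_le_mul_of_nonneg_left ?_ ENNReal.toReal_nonneg)
    exact log_one_add_half_sq_add_le (by rw [le_div_iff₀ hr]; linarith) (by positivity)
end

section
/- Let s > 1 and let f ∈ L²(ℝ², ⟨x⟩^{2s} m(dx)). Then for every x ∈ ℝ² the integral ∫_{ℝ²} |log|x−y|| · |f(y)| m(dy) is finite, and the function x ↦ ∫_{ℝ²} log(1/|x−y|) f(y) m(dy) (the logarithmic potential of f, up to the factor 1/2π) is continuous on ℝ². -/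
/-!
Split `log (1 / ‖t‖) = log⁺ ‖t‖⁻¹ - log⁺ ‖t‖`. The singular part `log⁺ ‖t‖⁻¹` is square integrable
and `f ∈ L²`, so its convolution with `f` is continuous: approximating the kernel in `L²` by
continuous compactly supported functions gives continuous convolutions converging uniformly, by
Cauchy–Schwarz. The growing part satisfies `log⁺ ‖x - y‖ ≤ log⁺ ‖x‖ + log 2 + log⁺ ‖y‖`, and
`f`, `log⁺ ‖y‖ f` are integrable because `⟨y⟩^a f ∈ L¹` for `a < s - 1` (Cauchy–Schwarz against
`⟨y⟩^(a - s) ∈ L²`); dominated convergence then gives continuity.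
-/

open MeasureTheory Real Filter

theorem Real.abs_log_eq_posLog_add_posLog_inv (x : ℝ) : |log x| = log⁺ x + log⁺ x⁻¹ := by
  rw [posLog_apply, posLog_apply, log_inv, max_comm 0, max_comm 0,
    max_zero_add_max_neg_zero_eq_abs_self]

theorem Real.posLog_le_rpow_div {x ε : ℝ} (hx : 0 ≤ x) (hε : 0 < ε) : log⁺ x ≤ x ^ ε / ε :=
  max_le (by positivity) (log_le_rpow_div hx hε)

section ConvolutionL2

variable {G : Type*} [NormedAddCommGroup G] [MeasurableSpace G] [BorelSpace G]
  [LocallyCompactSpace G] {μ : Measure G} [μ.IsAddHaarMeasure] [μ.Regular] {g f : G → ℝ}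

theorem enorm_integral_mul_sub_le (x : G) (hg : AEStronglyMeasurable g μ)
    (hf : AEStronglyMeasurable f μ) :
    ‖∫ y, g (x - y) * f y ∂μ‖ₑ ≤ eLpNorm g 2 μ * eLpNorm f 2 μ := by
  have hx := Measure.measurePreserving_sub_left μ x
  calc ‖∫ y, g (x - y) * f y ∂μ‖ₑ ≤ eLpNorm ((g ∘ (x - ·)) • f) 1 μ :=
        (enorm_integral_le_lintegral_enorm _).trans_eq eLpNorm_one_eq_lintegral_enorm.symm
    _ ≤ eLpNorm (g ∘ (x - ·)) 2 μ * eLpNorm f 2 μ :=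
        eLpNorm_smul_le_mul_eLpNorm hf (hg.comp_measurePreserving hx)
    _ = eLpNorm g 2 μ * eLpNorm f 2 μ := by rw [eLpNorm_comp_measurePreserving hg hx]

theorem integrable_mul_sub_of_memLp_two (x : G) (hg : MemLp g 2 μ) (hf : MemLp f 2 μ) :
    Integrable (fun y => g (x - y) * f y) μ :=
  (hg.comp_measurePreserving (Measure.measurePreserving_sub_left μ x)).integrable_mul hf

theorem continuous_integral_mul_sub_of_memLp_two (hg : MemLp g 2 μ) (hf : MemLp f 2 μ) :
    Continuous fun x => ∫ y, g (x - y) * f y ∂μ := by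
  refine continuous_of_uniform_approx_of_continuous fun u hu => ?_
  obtain ⟨ε, hε, hεu⟩ := mem_uniformity_edist.1 hu
  obtain ⟨δ, hδ, hδε⟩ := ENNReal.exists_pos_mul_lt hf.eLpNorm_lt_top.ne hε.ne'
  obtain ⟨g', hg'_supp, hgg', hg'_cont, hg'⟩ :=
    hg.exists_hasCompactSupport_eLpNorm_sub_le ENNReal.ofNat_ne_top hδ.ne'
  refine ⟨fun x => ∫ y, g' (x - y) * f y ∂μ, ?_, fun x => hεu ?_⟩
  · have := hg'_supp.continuous_convolution_right (ContinuousLinearMap.mul ℝ ℝ) (μ := μ)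
      (hf.locallyIntegrable one_le_two) hg'_cont
    convert this using 2 with x
    simp only [convolution_def, ContinuousLinearMap.mul_apply', mul_comm]
  · calc edist (∫ y, g (x - y) * f y ∂μ) (∫ y, g' (x - y) * f y ∂μ)
        = ‖∫ y, (g - g') (x - y) * f y ∂μ‖ₑ := by
          rw [edist_eq_enorm_sub, ← integral_sub (integrable_mul_sub_of_memLp_two x hg hf)
            (integrable_mul_sub_of_memLp_two x hg' hf)]
          simp only [Pi.sub_apply, sub_mul]
      _ ≤ eLpNorm (g - g') 2 μ * eLpNorm f 2 μ :=
          enorm_integral_mul_sub_le x (hg.1.sub hg'.1) hf.1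
      _ ≤ δ * eLpNorm f 2 μ := by gcongr
      _ < ε := hδε

end ConvolutionL2

section LogGrowth

variable {E : Type*} [NormedAddCommGroup E]

theorem posLog_norm_sub_le_of_norm_le {x : E} {R : ℝ} (hx : ‖x‖ ≤ R) (y : E) :
    log⁺ ‖x - y‖ ≤ log⁺ R + log 2 + log⁺ ‖y‖ := by
  have h := posLog_norm_add_le x (-y)
  rw [← sub_eq_add_neg, norm_neg] at h
  linarith [posLog_le_posLog (norm_nonneg x) hx]

theorem norm_posLog_norm_sub_mul_le {x : E} {R : ℝ} (hx : ‖x‖ ≤ R) (f : E → ℝ) (y : E) :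
    ‖log⁺ ‖x - y‖ * f y‖ ≤ (log⁺ R + log 2) * ‖f y‖ + ‖log⁺ ‖y‖ * f y‖ := by
  rw [norm_mul, norm_mul, norm_of_nonneg posLog_nonneg, norm_of_nonneg posLog_nonneg, ← add_mul]
  gcongr
  linarith [posLog_norm_sub_le_of_norm_le hx y]

theorem continuous_rpow_one_add_norm_sq (a : ℝ) : Continuous fun y : E => (1 + ‖y‖ ^ 2) ^ a :=
  (by fun_prop : Continuous fun y : E => 1 + ‖y‖ ^ 2).rpow_const
    fun y => Or.inl (by positivity : (0 : ℝ) < 1 + ‖y‖ ^ 2).ne'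

theorem norm_le_norm_rpow_one_add_norm_sq_mul {a : ℝ} (ha : 0 ≤ a) (f : E → ℝ) (y : E) :
    ‖f y‖ ≤ ‖(1 + ‖y‖ ^ 2) ^ a * f y‖ := by
  have hy : 1 ≤ 1 + ‖y‖ ^ 2 := le_add_of_nonneg_right (sq_nonneg _)
  rw [norm_mul, norm_of_nonneg (rpow_nonneg (zero_le_one.trans hy) a)]
  exact le_mul_of_one_le_left (norm_nonneg _) (one_le_rpow hy ha)

theorem norm_posLog_norm_mul_le {a : ℝ} (ha : 0 < a) (f : E → ℝ) (y : E) :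
    ‖log⁺ ‖y‖ * f y‖ ≤ a⁻¹ * ‖(1 + ‖y‖ ^ 2) ^ a * f y‖ := by
  have hy : ‖y‖ ≤ 1 + ‖y‖ ^ 2 := by nlinarith [sq_nonneg (‖y‖ - 1)]
  have hy₀ : 0 ≤ 1 + ‖y‖ ^ 2 := by positivity
  rw [norm_mul, norm_mul, norm_of_nonneg posLog_nonneg, norm_of_nonneg (rpow_nonneg hy₀ a),
    ← mul_assoc, inv_mul_eq_div]
  exact mul_le_mul_of_nonneg_right
    ((posLog_le_posLog (norm_nonneg y) hy).trans (posLog_le_rpow_div hy₀ ha)) (norm_nonneg _)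

variable [MeasurableSpace E] [OpensMeasurableSpace E] {μ : Measure E} {f : E → ℝ}

theorem memLp_two_rpow_one_add_norm_sq_mul {s : ℝ} (hf : AEStronglyMeasurable f μ)
    (h : ∫⁻ y, ENNReal.ofReal ((1 + ‖y‖ ^ 2) ^ s * f y ^ 2) ∂μ < ⊤) :
    MemLp (fun y => (1 + ‖y‖ ^ 2) ^ (s / 2) * f y) 2 μ := by
  have hsq (y : E) : ((1 + ‖y‖ ^ 2) ^ (s / 2) * f y) ^ 2 = (1 + ‖y‖ ^ 2) ^ s * f y ^ 2 := by
    rw [mul_pow, ← rpow_natCast, ← rpow_mul (by positivity)]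
    norm_num
  have hmeas : AEStronglyMeasurable (fun y => (1 + ‖y‖ ^ 2) ^ (s / 2) * f y) μ :=
    (continuous_rpow_one_add_norm_sq _).aestronglyMeasurable.mul hf
  refine (memLp_two_iff_integrable_sq hmeas).2 ⟨hmeas.pow 2, ?_⟩
  rw [hasFiniteIntegral_iff_ofReal (Eventually.of_forall fun y => sq_nonneg _)]
  simpa only [hsq] using h

theorem integrable_posLog_norm_sub_mul (hf : Integrable f μ)
    (hlog : Integrable (fun y => log⁺ ‖y‖ * f y) μ) (x : E) :
    Integrable (fun y => log⁺ ‖x - y‖ * f y) μ :=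
  ((hf.norm.const_mul _).add hlog.norm).mono'
    ((by fun_prop : Continuous fun y : E => log⁺ ‖x - y‖).aestronglyMeasurable.mul hf.1)
    (Eventually.of_forall (norm_posLog_norm_sub_mul_le le_rfl f))

theorem continuous_integral_posLog_norm_sub_mul (hf : Integrable f μ)
    (hlog : Integrable (fun y => log⁺ ‖y‖ * f y) μ) :
    Continuous fun x => ∫ y, log⁺ ‖x - y‖ * f y ∂μ := by
  refine continuous_iff_continuousAt.2 fun x₀ => continuousAt_of_dominated
    (Eventually.of_forall fun x => (integrable_posLog_norm_sub_mul hf hlog x).1) ?_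
    ((hf.norm.const_mul (log⁺ (‖x₀‖ + 1) + log 2)).add hlog.norm)
    (Eventually.of_forall fun y => by fun_prop)
  filter_upwards [Metric.closedBall_mem_nhds x₀ one_pos] with x hx
  refine Eventually.of_forall (norm_posLog_norm_sub_mul_le ?_ f)
  have := norm_le_norm_add_norm_sub' x x₀
  rw [mem_closedBall_iff_norm] at hx
  linarith

end LogGrowth

section LogPotential

variable {E : Type*} [NormedAddCommGroup E] [NormedSpace ℝ E] [FiniteDimensional ℝ E]
  [MeasurableSpace E] [BorelSpace E] {μ : Measure E} [μ.IsAddHaarMeasure] {f : E → ℝ}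

theorem integrable_rpow_one_add_norm_sq_mul {s a : ℝ}
    (hsa : (Module.finrank ℝ E : ℝ) < 2 * (s - a))
    (hf : MemLp (fun y => (1 + ‖y‖ ^ 2) ^ (s / 2) * f y) 2 μ) :
    Integrable (fun y => (1 + ‖y‖ ^ 2) ^ (a / 2) * f y) μ := by
  have hdecay : MemLp (fun y : E => (1 + ‖y‖ ^ 2) ^ ((a - s) / 2)) 2 μ := by
    rw [memLp_two_iff_integrable_sq
      (continuous_rpow_one_add_norm_sq _).aestronglyMeasurable]
    refine (integrable_rpow_neg_one_add_norm_sq hsa).congr (Eventually.of_forall fun y => ?_)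
    dsimp only
    rw [← rpow_natCast ((1 + ‖y‖ ^ 2) ^ ((a - s) / 2)) 2, ← rpow_mul (by positivity)]
    ring_nf
  refine (hdecay.integrable_mul hf).congr (Eventually.of_forall fun y => ?_)
  simp only [Pi.mul_apply]
  rw [← mul_assoc, ← rpow_add (by positivity)]
  ring_nf

theorem memLp_two_posLog_norm_inv [Nontrivial E] : MemLp (fun t : E => log⁺ ‖t‖⁻¹) 2 μ := by
  have hmeas : AEStronglyMeasurable (fun t : E => log⁺ ‖t‖⁻¹) μ :=
    (continuous_posLog.measurable.comp measurable_norm.inv).aestronglyMeasurable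
  rw [memLp_two_iff_integrable_sq hmeas,
    ← integrableOn_iff_integrable_of_support_subset (s := Metric.ball 0 1)]
  · have hd : 1 ≤ Module.finrank ℝ E := Module.finrank_pos
    refine integrableOn_ball_of_norm_le_rpow (C := 16) (α := 1 / 2) hd
      ((by norm_num : (1 / 2 : ℝ) < 1).trans_le (by exact_mod_cast hd))
      (Eventually.of_forall fun t => ?_) (hmeas.pow 2)
    have h := posLog_le_rpow_div (inv_nonneg.2 (norm_nonneg t)) (by norm_num : (0 : ℝ) < 1 / 4)
    rw [norm_pow, norm_of_nonneg posLog_nonneg]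
    calc log⁺ ‖t‖⁻¹ ^ 2 ≤ (‖t‖⁻¹ ^ (1 / 4 : ℝ) / (1 / 4)) ^ 2 := by gcongr; exact posLog_nonneg
      _ = 16 * ‖t‖ ^ (-(1 / 2) : ℝ) := by
        rw [inv_rpow (norm_nonneg t), ← rpow_neg (norm_nonneg t), div_pow,
          ← rpow_natCast, ← rpow_mul (norm_nonneg t)]
        norm_num
        ring
  · intro t ht
    rw [Function.mem_support, ne_eq, pow_eq_zero_iff two_ne_zero, posLog_eq_zero_iff,
      abs_of_nonneg (inv_nonneg.2 (norm_nonneg t)), not_le] at ht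
    rw [mem_ball_zero_iff]
    exact (one_lt_inv₀ (inv_pos.1 (one_pos.trans ht))).1 ht

variable [Nontrivial E]

theorem integrable_abs_log_norm_sub_mul (hf : MemLp f 2 μ) (hf₁ : Integrable f μ)
    (hlog : Integrable (fun y => log⁺ ‖y‖ * f y) μ) (x : E) :
    Integrable (fun y => |log ‖x - y‖| * f y) μ := by
  simp_rw [abs_log_eq_posLog_add_posLog_inv, add_mul]
  exact (integrable_posLog_norm_sub_mul hf₁ hlog x).add
    (integrable_mul_sub_of_memLp_two x memLp_two_posLog_norm_inv hf)

theorem continuous_integral_log_inv_norm_sub_mul (hf : MemLp f 2 μ) (hf₁ : Integrable f μ)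
    (hlog : Integrable (fun y => log⁺ ‖y‖ * f y) μ) :
    Continuous fun x => ∫ y, log (1 / ‖x - y‖) * f y ∂μ := by
  have hsplit : (fun x => ∫ y, log (1 / ‖x - y‖) * f y ∂μ) =
      fun x => ∫ y, log⁺ ‖x - y‖⁻¹ * f y ∂μ - ∫ y, log⁺ ‖x - y‖ * f y ∂μ := by
    ext x
    rw [← integral_sub (integrable_mul_sub_of_memLp_two x memLp_two_posLog_norm_inv hf)
      (integrable_posLog_norm_sub_mul hf₁ hlog x)]
    simp only [one_div, ← posLog_sub_posLog_inv, inv_inv, sub_mul]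
  rw [hsplit]
  exact (continuous_integral_mul_sub_of_memLp_two memLp_two_posLog_norm_inv hf).sub
    (continuous_integral_posLog_norm_sub_mul hf₁ hlog)

end LogPotential

theorem stmt8 (s : ℝ) (hs : 1 < s) (f : EuclideanSpace ℝ (Fin 2) → ℝ)
    (hf : Measurable f)
    (hf2 : ∫⁻ y, ENNReal.ofReal ((1 + ‖y‖ ^ 2) ^ s * f y ^ 2) < ⊤) :
    (∀ x : EuclideanSpace ℝ (Fin 2),
      ∫⁻ y, ENNReal.ofReal (|Real.log ‖x - y‖| * |f y|) < ⊤) ∧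
    Continuous (fun x : EuclideanSpace ℝ (Fin 2) => ∫ y, Real.log (1 / ‖x - y‖) * f y) := by
  have ha : 0 < (s - 1) / 2 / 2 := by linarith
  have hweighted := memLp_two_rpow_one_add_norm_sq_mul hf.aestronglyMeasurable hf2
  have hL2 : MemLp f 2 := hweighted.mono hf.aestronglyMeasurable
    (Eventually.of_forall (norm_le_norm_rpow_one_add_norm_sq_mul (a := s / 2) (by linarith) f))
  have hL1w : Integrable (fun y => (1 + ‖y‖ ^ 2) ^ ((s - 1) / 2 / 2) * f y) :=
    integrable_rpow_one_add_norm_sq_mul (by rw [finrank_euclideanSpace_fin]; push_cast; linarith)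
      hweighted
  have hL1 : Integrable f := hL1w.norm.mono' hf.aestronglyMeasurable
    (Eventually.of_forall (norm_le_norm_rpow_one_add_norm_sq_mul ha.le f))
  have hlog : Integrable (fun y => log⁺ ‖y‖ * f y) :=
    (hL1w.norm.const_mul _).mono' (by fun_prop)
      (Eventually.of_forall (norm_posLog_norm_mul_le ha f))
  refine ⟨fun x => ?_, continuous_integral_log_inv_norm_sub_mul hL2 hL1 hlog⟩
  simpa only [norm_mul, norm_abs_eq_norm, norm_eq_abs] using
    (integrable_abs_log_norm_sub_mul hL2 hL1 hlog x).norm.lintegral_lt_top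
end

section
/- Let l ∈ ℕ₀ and s > l + 1. Then ∫_{S¹} ∫_{ℝ²} ⟨x⟩^{−2s} | e^{−i λ^{1/2} ω·x} − Σ_{j=0}^{l} (−i λ^{1/2} ω·x)^j / j! |² m(dx) σ(dω) = o(λ^{l}) as λ ↓ 0, where σ is the arclength measure on the unit circle S¹ ⊆ ℝ². (This expresses that the spectral representation trace operator U(λ), with kernel (1/√2)(2π)^{−1} e^{−iλ^{1/2} ω·x}, satisfies ‖U(λ) − Σ_{j=0}^l (iλ^{1/2})^j U_j‖ = o(λ^{l/2}) in Hilbert–Schmidt norm from 𝓗_s to L²(S¹,σ), where U_j has kernel (1/√2)(2π)^{−1}((−1)^j/j!)(ω·x)^j.) -/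
/-! The Taylor remainder of `e^{-it}` after the terms of degree `≤ l` is at most
`(l + 2) |t|^l min(|t|, 1)`. With `t = λ^{1/2} ω·x` and `|ω·x| ≤ |x|`, the integrand is therefore
`λ^l` times a function which is dominated, uniformly in `λ`, by `(l + 2)² ⟨x⟩^{2l-2s}`, integrable
on `S¹ × ℝ²` because `2(s - l) > 2`, and which tends to `0` pointwise as `λ ↓ 0`; dominated
convergence gives the `o(λ^l)`. -/

open MeasureTheory Finset Filter Topology

namespace Complex

theorem norm_exp_sub_sum_range_succ_le_of_norm_le_one {z : ℂ} (hz : ‖z‖ ≤ 1) (n : ℕ) :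
    ‖exp z - ∑ j ∈ range (n + 1), z ^ j / j.factorial‖ ≤ 2 * ‖z‖ ^ (n + 1) := by
  refine (exp_bound hz n.succ_pos).trans ?_
  rw [mul_comm]
  gcongr
  have hfac : (1 : ℝ) ≤ (n + 1).factorial := mod_cast (n + 1).factorial_pos
  rw [mul_inv_le_iff₀ (by positivity)]
  push_cast
  nlinarith

theorem norm_exp_sub_sum_range_succ_le_of_one_le_norm {z : ℂ} (hre : z.re ≤ 0) (hz : 1 ≤ ‖z‖)
    (n : ℕ) : ‖exp z - ∑ j ∈ range (n + 1), z ^ j / j.factorial‖ ≤ (n + 2) * ‖z‖ ^ n := by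
  have hsum : ‖∑ j ∈ range (n + 1), z ^ j / j.factorial‖ ≤ (n + 1) * ‖z‖ ^ n :=
    calc ‖∑ j ∈ range (n + 1), z ^ j / j.factorial‖
        ≤ ∑ j ∈ range (n + 1), ‖z ^ j / j.factorial‖ := norm_sum_le _ _
      _ ≤ ∑ _j ∈ range (n + 1), ‖z‖ ^ n := by
        refine sum_le_sum fun j hj => ?_
        rw [norm_div, norm_pow, norm_natCast]
        exact (div_le_self (by positivity) (mod_cast j.factorial_pos)).trans
          (pow_le_pow_right₀ hz (Nat.lt_succ_iff.mp (mem_range.mp hj)))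
      _ = (n + 1) * ‖z‖ ^ n := by simp
  have hexp : ‖exp z‖ ≤ 1 := by rw [norm_exp]; exact Real.exp_le_one_iff.mpr hre
  calc _ ≤ ‖exp z‖ + ‖∑ j ∈ range (n + 1), z ^ j / j.factorial‖ := norm_sub_le _ _
    _ ≤ 1 + (n + 1) * ‖z‖ ^ n := add_le_add hexp hsum
    _ ≤ (n + 2) * ‖z‖ ^ n := by nlinarith [one_le_pow₀ (n := n) hz]

theorem norm_exp_sub_sum_range_succ_le_mul_min {z : ℂ} (hre : z.re ≤ 0) (n : ℕ) :
    ‖exp z - ∑ j ∈ range (n + 1), z ^ j / j.factorial‖ ≤ (n + 2) * ‖z‖ ^ n * min ‖z‖ 1 := by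
  rcases le_total ‖z‖ 1 with hz | hz
  · rw [min_eq_left hz, mul_assoc, ← pow_succ]
    exact (norm_exp_sub_sum_range_succ_le_of_norm_le_one hz n).trans
      (by gcongr; linarith [n.cast_nonneg (α := ℝ)])
  · rw [min_eq_right hz, mul_one]
    exact norm_exp_sub_sum_range_succ_le_of_one_le_norm hre hz n

theorem norm_exp_neg_I_mul_sqrt_sub_sum_sq_le (n : ℕ) {lam : ℝ} (hlam : 0 ≤ lam) (u : ℝ) :
    ‖exp (-I * ((√lam * u : ℝ) : ℂ)) -
        ∑ j ∈ range (n + 1), (-I * ((√lam * u : ℝ) : ℂ)) ^ j / j.factorial‖ ^ 2 ≤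
      lam ^ n * ((n + 2) * |u| ^ n * min (√lam * |u|) 1) ^ 2 := by
  have hnorm : ‖-I * ((√lam * u : ℝ) : ℂ)‖ = √lam * |u| := by
    simp [abs_of_nonneg (Real.sqrt_nonneg lam)]
  have hre : (-I * ((√lam * u : ℝ) : ℂ)).re ≤ 0 := by simp
  calc _ ≤ ((n + 2) * (√lam * |u|) ^ n * min (√lam * |u|) 1) ^ 2 := by
        gcongr
        simpa only [hnorm] using norm_exp_sub_sum_range_succ_le_mul_min hre n
    _ = lam ^ n * ((n + 2) * |u| ^ n * min (√lam * |u|) 1) ^ 2 := by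
        rw [show lam ^ n = √lam ^ (2 * n) by rw [pow_mul, Real.sq_sqrt hlam]]; ring

end Complex

section DominatedConvergence

variable {Θ E : Type*} [MeasurableSpace Θ] [NormedAddCommGroup E] [NormedSpace ℝ E]
  [FiniteDimensional ℝ E] [MeasurableSpace E] [BorelSpace E]

theorem tendsto_lintegral_lintegral_rpow_mul_min_sqrt_nhdsGT_zero (μ : Measure Θ)
    [IsFiniteMeasure μ] (ν : Measure E) [ν.IsAddHaarMeasure] (l : ℕ) (c s : ℝ)
    (hs : (Module.finrank ℝ E : ℝ) < 2 * (s - l)) (u : Θ → E → ℝ)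
    (hu : Measurable (Function.uncurry u)) (hle : ∀ θ x, |u θ x| ≤ ‖x‖) :
    Tendsto (fun lam : ℝ => ∫⁻ θ, ∫⁻ x, ENNReal.ofReal ((1 + ‖x‖ ^ 2) ^ (-s) *
        (c * |u θ x| ^ l * min (√lam * |u θ x|) 1) ^ 2) ∂ν ∂μ)
      (𝓝[>] 0) (𝓝 0) := by
  set F : ℝ → Θ × E → ENNReal := fun lam p => ENNReal.ofReal ((1 + ‖p.2‖ ^ 2) ^ (-s) *
    (c * |u p.1 p.2| ^ l * min (√lam * |u p.1 p.2|) 1) ^ 2)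
  set B : Θ × E → ENNReal := fun p =>
    ENNReal.ofReal (c ^ 2 * (1 + ‖p.2‖ ^ 2) ^ (-(2 * (s - l)) / 2))
  have hF_meas : ∀ lam, Measurable (F lam) := fun lam => by
    fun_prop (disch := intros; positivity)
  have hF_le : ∀ lam p, F lam p ≤ B p := by
    rintro lam ⟨θ, x⟩
    refine ENNReal.ofReal_le_ofReal ?_
    have hpos : 0 < 1 + ‖x‖ ^ 2 := by positivity
    have hmin : (min (√lam * |u θ x|) 1) ^ 2 ≤ 1 :=
      pow_le_one₀ (le_min (by positivity) zero_le_one) (min_le_right _ _)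
    have hu2 : |u θ x| ^ (2 * l) ≤ (1 + ‖x‖ ^ 2) ^ l := by
      rw [pow_mul]
      gcongr
      linarith [pow_le_pow_left₀ (abs_nonneg _) (hle θ x) 2]
    calc (1 + ‖x‖ ^ 2) ^ (-s) * (c * |u θ x| ^ l * min (√lam * |u θ x|) 1) ^ 2
        = (1 + ‖x‖ ^ 2) ^ (-s) * c ^ 2 * |u θ x| ^ (2 * l) * (min (√lam * |u θ x|) 1) ^ 2 :=
          by ring
      _ ≤ (1 + ‖x‖ ^ 2) ^ (-s) * c ^ 2 * (1 + ‖x‖ ^ 2) ^ l * 1 := by gcongr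
      _ = c ^ 2 * (1 + ‖x‖ ^ 2) ^ (-(2 * (s - l)) / 2) := by
          rw [show -(2 * (s - l)) / 2 = -s + l by ring, Real.rpow_add hpos, Real.rpow_natCast]
          ring
  have hB_fin : ∫⁻ p, B p ∂μ.prod ν ≠ ⊤ := by
    have hint := (integrable_rpow_neg_one_add_norm_sq (μ := ν) hs).const_mul (c ^ 2)
    rw [lintegral_prod _ (by fun_prop)]
    simp only [B]
    rw [lintegral_const]
    exact ENNReal.mul_ne_top hint.lintegral_lt_top.ne (measure_ne_top μ _)
  have hF_lim : ∀ p, Tendsto (fun lam => F lam p) (𝓝[>] 0) (𝓝 0) := by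
    intro p
    have hcont : Continuous fun lam : ℝ => (1 + ‖p.2‖ ^ 2) ^ (-s) *
        (c * |u p.1 p.2| ^ l * min (√lam * |u p.1 p.2|) 1) ^ 2 := by fun_prop
    have := (ENNReal.continuous_ofReal.comp hcont).tendsto 0
    simpa [F, Function.comp_def] using this.mono_left nhdsWithin_le_nhds
  have := tendsto_lintegral_filter_of_dominated_convergence B (.of_forall hF_meas)
    (.of_forall fun lam => .of_forall (hF_le lam)) hB_fin (.of_forall hF_lim)
  simp only [lintegral_zero] at this
  refine this.congr fun lam => ?_
  exact lintegral_prod _ (hF_meas lam).aemeasurable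

end DominatedConvergence

theorem EuclideanSpace.abs_cos_mul_add_sin_mul_le_norm (θ : ℝ) (x : EuclideanSpace ℝ (Fin 2)) :
    |Real.cos θ * x 0 + Real.sin θ * x 1| ≤ ‖x‖ := by
  have hx : ‖x‖ ^ 2 = x 0 ^ 2 + x 1 ^ 2 := by
    rw [EuclideanSpace.norm_eq, Real.sq_sqrt (by positivity)]
    simp [Fin.sum_univ_two, sq_abs]
  refine abs_le_of_sq_le_sq ?_ (norm_nonneg x)
  rw [hx]
  nlinarith [Real.sin_sq_add_cos_sq θ, sq_nonneg (Real.cos θ * x 1 - Real.sin θ * x 0)]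

theorem stmt9 (l : ℕ) (s : ℝ) (hs : (l : ℝ) + 1 < s) :
    ∀ ε > (0 : ℝ), ∃ δ > (0 : ℝ), ∀ lam : ℝ, 0 < lam → lam < δ →
      (∫⁻ θ in Set.Ioc (0 : ℝ) (2 * Real.pi), ∫⁻ x : EuclideanSpace ℝ (Fin 2),
        ENNReal.ofReal ((1 + ‖x‖ ^ 2) ^ (-s) *
          ‖Complex.exp (-Complex.I *
              ((Real.sqrt lam * (Real.cos θ * x 0 + Real.sin θ * x 1) : ℝ) : ℂ)) -
            ∑ j ∈ Finset.range (l + 1),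
              (-Complex.I *
                  ((Real.sqrt lam * (Real.cos θ * x 0 + Real.sin θ * x 1) : ℝ) : ℂ)) ^ j /
                (j.factorial : ℂ)‖ ^ 2)) ≤
        ENNReal.ofReal (ε * lam ^ l) := by
  intro ε hε
  have hlim := tendsto_lintegral_lintegral_rpow_mul_min_sqrt_nhdsGT_zero
    (volume.restrict (Set.Ioc 0 (2 * Real.pi))) volume l (l + 2) s
    (by rw [finrank_euclideanSpace_fin]; push_cast; linarith)
    (fun θ (x : EuclideanSpace ℝ (Fin 2)) => Real.cos θ * x 0 + Real.sin θ * x 1) (by fun_prop)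
    EuclideanSpace.abs_cos_mul_add_sin_mul_le_norm
  obtain ⟨δ, hδ, hsmall⟩ := mem_nhdsGT_iff_exists_Ioo_subset.mp
    (hlim.eventually_lt_const (ENNReal.ofReal_pos.mpr hε))
  refine ⟨δ, hδ, fun lam hlam hlamδ => ?_⟩
  set u : ℝ → EuclideanSpace ℝ (Fin 2) → ℝ := fun θ x => Real.cos θ * x 0 + Real.sin θ * x 1
  set g : ℝ → EuclideanSpace ℝ (Fin 2) → ℝ := fun θ x =>
    (1 + ‖x‖ ^ 2) ^ (-s) * ((l + 2) * |u θ x| ^ l * min (√lam * |u θ x|) 1) ^ 2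
  calc _ ≤ ∫⁻ θ in Set.Ioc (0 : ℝ) (2 * Real.pi), ∫⁻ x,
          ENNReal.ofReal (lam ^ l) * ENNReal.ofReal (g θ x) := by
        refine lintegral_mono fun θ => lintegral_mono fun x => ?_
        rw [← ENNReal.ofReal_mul (by positivity), mul_left_comm]
        gcongr
        exact Complex.norm_exp_neg_I_mul_sqrt_sub_sum_sq_le l hlam.le (u θ x)
    _ = ENNReal.ofReal (lam ^ l) *
          ∫⁻ θ in Set.Ioc (0 : ℝ) (2 * Real.pi), ∫⁻ x, ENNReal.ofReal (g θ x) := by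
        simp_rw [lintegral_const_mul' _ _ ENNReal.ofReal_ne_top]
    _ ≤ ENNReal.ofReal (lam ^ l) * ENNReal.ofReal ε := by
        gcongr
        exact (hsmall ⟨hlam, hlamδ⟩).le
    _ = ENNReal.ofReal (ε * lam ^ l) := by rw [← ENNReal.ofReal_mul (by positivity), mul_comm]
end

section
/- Let X be a complex Banach space, θ > 0, and (e_j)_{j≥1} a sequence of nonnegative reals. Suppose given bounded linear operators E_j^k on X, for integers j ≥ 1 and k ≤ 1, satisfying ‖E_j^k‖ ≤ e_j θ^{−k}. For j ≥ 1 and integers k < 0 define D_j^k := Σ_{n=1}^{∞} Σ_{α} Σ_{β} E_{α₁}^{β₁} E_{α₂}^{β₂} ⋯ E_{α_n}^{β_n}, where α runs over n-tuples of positive integers with α₁+⋯+α_n = j and β runs over n-tuples of integers with β_i ≤ 1 for all i and β₁+⋯+β_n = k (this is a finite sum, since necessarily n ≤ j and each β_i ≥ k−(n−1)). Then for each j ≥ 1 there is a finite constant d_j such that ‖D_j^k‖ ≤ d_j |k|^{j−1} θ^{−k} for all integers k < 0. -/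
/-!
Every product `E_{α₁}^{β₁} ⋯ E_{α_n}^{β_n}` occurring in `D_j^k` has norm at most
`e_{α₁} ⋯ e_{α_n} θ^{-k}`, because the exponents `-βᵢ` add up to `-k`. For fixed `n` and `α`,
a tuple `β` with `∑ βᵢ = k` is determined by its first `n - 1` entries, each of which lies in an
interval of `n + 1 - k ≤ (j + 2)|k|` integers; so there are at most `((j + 2)|k|)^{j-1}` such
tuples, and summing over the finitely many `(n, α)` gives `d_j`.
-/

/- The operator `D_j^k`: the sum over all ordered compositions
`E_{α₁}^{β₁} ⋯ E_{α_n}^{β_n}` with `αᵢ ≥ 1`, `∑ αᵢ = j`, `βᵢ ≤ 1`, `∑ βᵢ = k`. -/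
noncomputable def stmt10D {X : Type*} [NormedAddCommGroup X] [NormedSpace ℂ X]
    (E : ℕ → ℤ → X →L[ℂ] X) (j : ℕ) (k : ℤ) : X →L[ℂ] X :=
  ∑ n ∈ Finset.Icc 1 j,
    ∑ a ∈ (Fintype.piFinset fun _ : Fin n => Finset.Icc 1 j).filter
        (fun a => ∑ i, a i = j),
      ∑ b ∈ (Fintype.piFinset fun _ : Fin n => Finset.Icc (k - ((n : ℤ) - 1)) 1).filter
        (fun b => ∑ i, b i = k),
        (List.ofFn fun i => E (a i) (b i)).prod

open Finset

theorem prod_zpow_eq_zpow_sum {G : Type*} [CommGroupWithZero G] {θ : G} (hθ : θ ≠ 0)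
    {ι : Type*} (s : Finset ι) (f : ι → ℤ) :
    ∏ i ∈ s, θ ^ f i = θ ^ (∑ i ∈ s, f i) := by
  induction s using Finset.cons_induction with
  | empty => simp
  | cons a s _ ih => rw [prod_cons, sum_cons, ih, zpow_add₀ hθ]

theorem norm_prod_ofFn_le {R : Type*} [SeminormedRing R] {n : ℕ} (hn : n ≠ 0)
    (f : Fin n → R) : ‖(List.ofFn f).prod‖ ≤ ∏ i, ‖f i‖ := by
  calc ‖(List.ofFn f).prod‖ ≤ ((List.ofFn f).map norm).prod :=
        List.norm_prod_le' (by simpa using hn)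
    _ = ∏ i, ‖f i‖ := by rw [List.map_ofFn, List.prod_ofFn]; rfl

theorem card_filter_piFinset_sum_eq_le {M : Type*} [AddCancelCommMonoid M] [DecidableEq M]
    (n : ℕ) (s : Finset M) (k : M) :
    #{b ∈ Fintype.piFinset fun _ : Fin (n + 1) => s | ∑ i, b i = k} ≤ #s ^ n := by
  rw [← Fintype.card_piFinset_const]
  refine card_le_card_of_injOn (fun b (i : Fin n) => b i.castSucc) ?_ ?_
  · intro b hb
    rw [mem_coe, mem_filter, Fintype.mem_piFinset] at hb
    rw [mem_coe, Fintype.mem_piFinset]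
    exact fun i => hb.1 i.castSucc
  · intro b₁ h₁ b₂ h₂ hinit
    rw [mem_coe, mem_filter] at h₁ h₂
    have hsum₁ := h₁.2
    have hsum₂ := h₂.2
    rw [Fin.sum_univ_castSucc] at hsum₁ hsum₂
    have hinit' : ∀ i : Fin n, b₁ i.castSucc = b₂ i.castSucc := congrFun hinit
    have hlast : b₁ (Fin.last n) = b₂ (Fin.last n) := by
      simp only [hinit'] at hsum₁
      exact add_left_cancel (hsum₁.trans hsum₂.symm)
    funext i
    exact Fin.lastCases hlast hinit' i

theorem card_Icc_sub_le {n j : ℕ} {k : ℤ} (hn : n ≤ j) (hk : k < 0) :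
    (#(Icc (k - ((n : ℤ) - 1)) 1) : ℝ) ≤ (j + 2) * |(k : ℝ)| := by
  have hcard : (#(Icc (k - ((n : ℤ) - 1)) 1) : ℤ) = n + 1 - k := by
    rw [Int.card_Icc]; omega
  have hcardℝ : (#(Icc (k - ((n : ℤ) - 1)) 1) : ℝ) = n + 1 - k := by exact_mod_cast hcard
  have hkℝ : (k : ℝ) ≤ -1 := by exact_mod_cast Int.le_sub_one_of_lt hk
  have hnℝ : (n : ℝ) ≤ j := by exact_mod_cast hn
  rw [hcardℝ, abs_of_neg (by linarith)]
  nlinarith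

section Compositions

variable {X : Type*} [NormedAddCommGroup X] [NormedSpace ℂ X]
  {θ : ℝ} {e : ℕ → ℝ} {E : ℕ → ℤ → X →L[ℂ] X}

theorem norm_prod_ofFn_le_of_sum_eq (hθ : θ ≠ 0)
    (hE : ∀ (j : ℕ) (k : ℤ), 1 ≤ j → k ≤ 1 → ‖E j k‖ ≤ e j * θ ^ (-k))
    {n : ℕ} (hn : n ≠ 0) {a : Fin n → ℕ} {b : Fin n → ℤ} (ha : ∀ i, 1 ≤ a i)
    (hb : ∀ i, b i ≤ 1) :
    ‖(List.ofFn fun i => E (a i) (b i)).prod‖ ≤ (∏ i, e (a i)) * θ ^ (-∑ i, b i) :=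
  calc ‖(List.ofFn fun i => E (a i) (b i)).prod‖ ≤ ∏ i, ‖E (a i) (b i)‖ :=
        norm_prod_ofFn_le hn _
    _ ≤ ∏ i, e (a i) * θ ^ (-b i) :=
        prod_le_prod (fun _ _ => norm_nonneg _) fun i _ => hE _ _ (ha i) (hb i)
    _ = (∏ i, e (a i)) * θ ^ (-∑ i, b i) := by
        rw [prod_mul_distrib, prod_zpow_eq_zpow_sum hθ, sum_neg_distrib]

theorem norm_sum_compositions_le (hθ : 0 < θ) (he : ∀ j, 0 ≤ e j)
    (hE : ∀ (j : ℕ) (k : ℤ), 1 ≤ j → k ≤ 1 → ‖E j k‖ ≤ e j * θ ^ (-k))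
    {j n : ℕ} (hn : n ∈ Icc 1 j) {a : Fin n → ℕ} (ha : ∀ i, a i ∈ Icc 1 j)
    {k : ℤ} (hk : k < 0) :
    ‖∑ b ∈ (Fintype.piFinset fun _ : Fin n => Icc (k - ((n : ℤ) - 1)) 1).filter
        (fun b => ∑ i, b i = k), (List.ofFn fun i => E (a i) (b i)).prod‖
      ≤ ((j + 2) * |(k : ℝ)|) ^ (j - 1) * ((∏ i, e (a i)) * θ ^ (-k)) := by
  obtain ⟨hn₁, hnj⟩ := mem_Icc.mp hn
  obtain ⟨m, rfl⟩ : ∃ m, n = m + 1 := ⟨n - 1, by omega⟩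
  set I := Icc (k - ((↑(m + 1) : ℤ) - 1)) 1
  set B := (Fintype.piFinset fun _ : Fin (m + 1) => I).filter (fun b => ∑ i, b i = k)
  have hterm : ∀ b ∈ B, ‖(List.ofFn fun i => E (a i) (b i)).prod‖ ≤ (∏ i, e (a i)) * θ ^ (-k) := by
    intro b hb
    rw [mem_filter, Fintype.mem_piFinset] at hb
    rw [← hb.2]
    exact norm_prod_ofFn_le_of_sum_eq hθ.ne' hE (Nat.succ_ne_zero m)
      (fun i => (mem_Icc.mp (ha i)).1) (fun i => (mem_Icc.mp (hb.1 i)).2)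
  have hk₁ : 1 ≤ (j + 2) * |(k : ℝ)| := by
    have : (1 : ℝ) ≤ |(k : ℝ)| := by exact_mod_cast Int.one_le_abs hk.ne
    nlinarith
  have hcount : (#B : ℝ) ≤ ((j + 2) * |(k : ℝ)|) ^ (j - 1) :=
    calc (#B : ℝ) ≤ (#I : ℝ) ^ m := by exact_mod_cast card_filter_piFinset_sum_eq_le m I k
      _ ≤ ((j + 2) * |(k : ℝ)|) ^ m :=
          pow_le_pow_left₀ (Nat.cast_nonneg _) (card_Icc_sub_le hnj hk) m
      _ ≤ ((j + 2) * |(k : ℝ)|) ^ (j - 1) := pow_le_pow_right₀ hk₁ (by omega)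
  calc _ ≤ ∑ _b ∈ B, (∏ i, e (a i)) * θ ^ (-k) := norm_sum_le_of_le B hterm
    _ = #B * ((∏ i, e (a i)) * θ ^ (-k)) := by rw [sum_const, nsmul_eq_mul]
    _ ≤ _ := mul_le_mul_of_nonneg_right hcount
          (mul_nonneg (prod_nonneg fun i _ => he _) (zpow_pos hθ _).le)

end Compositions

theorem stmt10_general {X : Type*} [NormedAddCommGroup X] [NormedSpace ℂ X]
    (θ : ℝ) (hθ : 0 < θ) (e : ℕ → ℝ) (he : ∀ j, 0 ≤ e j)
    (E : ℕ → ℤ → X →L[ℂ] X)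
    (hE : ∀ (j : ℕ) (k : ℤ), 1 ≤ j → k ≤ 1 → ‖E j k‖ ≤ e j * θ ^ (-k)) :
    ∀ j : ℕ, 1 ≤ j → ∃ d : ℝ, ∀ k : ℤ, k < 0 →
      ‖stmt10D E j k‖ ≤ d * |(k : ℝ)| ^ (j - 1) * θ ^ (-k) := by
  intro j _
  refine ⟨(j + 2) ^ (j - 1) * ∑ n ∈ Icc 1 j,
    ∑ a ∈ (Fintype.piFinset fun _ : Fin n => Icc 1 j).filter (fun a => ∑ i, a i = j),
      ∏ i, e (a i), fun k hk => ?_⟩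
  calc ‖stmt10D E j k‖
      ≤ ∑ n ∈ Icc 1 j,
          ∑ a ∈ (Fintype.piFinset fun _ : Fin n => Icc 1 j).filter (fun a => ∑ i, a i = j),
            ((j + 2) * |(k : ℝ)|) ^ (j - 1) * ((∏ i, e (a i)) * θ ^ (-k)) :=
        norm_sum_le_of_le _ fun n hn => norm_sum_le_of_le _ fun a ha =>
          norm_sum_compositions_le hθ he hE hn (Fintype.mem_piFinset.mp (mem_filter.mp ha).1) hk
    _ = _ := by simp only [← mul_sum, ← sum_mul, mul_pow]; ring

theorem stmt10 {X : Type*} [NormedAddCommGroup X] [NormedSpace ℂ X] [CompleteSpace X]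
    (θ : ℝ) (hθ : 0 < θ) (e : ℕ → ℝ) (he : ∀ j, 0 ≤ e j)
    (E : ℕ → ℤ → X →L[ℂ] X)
    (hE : ∀ (j : ℕ) (k : ℤ), 1 ≤ j → k ≤ 1 → ‖E j k‖ ≤ e j * θ ^ (-k)) :
    ∀ j : ℕ, 1 ≤ j → ∃ d : ℝ, ∀ k : ℤ, k < 0 →
      ‖stmt10D E j k‖ ≤ d * |(k : ℝ)| ^ (j - 1) * θ ^ (-k) :=
  stmt10_general θ hθ e he E hE
end

section
/- Let X be a complex Banach space, let A and B₀ be bounded linear operators on X, let 𝟙, W ∈ X, and let p, v be continuous linear functionals on X. Assume: (a) B₀(A u) = u for every u ∈ X with p(u) = 0; (b) A(B₀ u) = u for every u ∈ X with v(u) = 0; (c) A W = 0; (d) B₀ 𝟙 = 0; (e) v(A u) = 0 for every u ∈ X; (f) p(B₀ u) = 0 for every u ∈ X; (g) p(W) = 1; (h) v(𝟙) = −1. Then for every σ ∈ ℂ with σ ≠ 0, the operator A_σ defined by A_σ u := A u + σ p(u) 𝟙 is bijective, with inverse B_σ given by B_σ u := B₀ u − σ^{−1} v(u) W. -/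
/- Abstract invertibility of `A_σ u = A u + σ p(u) 𝟙` with inverse
`B_σ u = B₀ u − σ⁻¹ v(u) W`, under hypotheses (a)–(h). -/
theorem stmt12 {X : Type*} [NormedAddCommGroup X] [NormedSpace ℂ X] [CompleteSpace X]
    (A B₀ : X →L[ℂ] X) (one W : X) (p v : X →L[ℂ] ℂ)
    (ha : ∀ u, p u = 0 → B₀ (A u) = u)
    (hb : ∀ u, v u = 0 → A (B₀ u) = u)
    (hc : A W = 0) (hd : B₀ one = 0)
    (he : ∀ u, v (A u) = 0) (hf : ∀ u, p (B₀ u) = 0)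
    (hg : p W = 1) (hh : v one = -1) :
    ∀ σ : ℂ, σ ≠ 0 →
      Function.Bijective (fun u => A u + (σ * p u) • one) ∧
      (∀ u, A (B₀ u - (σ⁻¹ * v u) • W) + (σ * p (B₀ u - (σ⁻¹ * v u) • W)) • one = u) ∧
      (∀ u, B₀ (A u + (σ * p u) • one) - (σ⁻¹ * v (A u + (σ * p u) • one)) • W = u) := by
  intro σ hσ
  -- key identity 1: A (B₀ u) = u + v u • one
  have key1 : ∀ u : X, A (B₀ u) = u + v u • one := by
    intro u
    have h0 : v (u + v u • one) = 0 := by simp [hh]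
    have := hb _ h0
    rw [map_add, map_smul, hd, smul_zero, add_zero] at this
    rw [this]
  -- key identity 2: B₀ (A u) = u - p u • W
  have key2 : ∀ u : X, B₀ (A u) = u - p u • W := by
    intro u
    have h0 : p (u - p u • W) = 0 := by simp [hg]
    have := ha _ h0
    rw [map_sub, map_smul, hc, smul_zero, sub_zero] at this
    rw [this]
  have hright : ∀ u, A (B₀ u - (σ⁻¹ * v u) • W) +
      (σ * p (B₀ u - (σ⁻¹ * v u) • W)) • one = u := by
    intro u
    rw [map_sub, map_smul, hc, smul_zero, sub_zero, key1, map_sub, map_smul, hf,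
      smul_eq_mul, hg, mul_one, zero_sub, mul_neg, mul_inv_cancel_left₀ hσ]
    module
  have hleft : ∀ u, B₀ (A u + (σ * p u) • one) -
      (σ⁻¹ * v (A u + (σ * p u) • one)) • W = u := by
    intro u
    rw [map_add, map_smul, hd, smul_zero, add_zero, key2, map_add, map_smul, he,
      smul_eq_mul, hh, zero_add, mul_neg_one, mul_neg, inv_mul_cancel_left₀ hσ]
    module
  refine ⟨⟨fun a b h => ?_, fun u => ⟨B₀ u - (σ⁻¹ * v u) • W, hright u⟩⟩, hright, hleft⟩
  have := congrArg (fun w => B₀ w - (σ⁻¹ * v w) • W) h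
  simpa only [hleft] using this
end
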